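/- For all n ≥ k ≥ 2 and r > s ≥ 1, A_k(n;r,s) ≤ m_k(n; binom(r,s), binom(r−1,s−1)) + 1. -/

import Mathlib

/-!
Let `N = m_k + 1` and suppose the colouring `Δ` of `[N]^(k)` has no tight monotone path with
`n` edges in at most `s` colours. For an `s`-set `C` of colours and a `(k - 1)`-tuple `e`, let
`x_C(e) < n` be the number of edges of a longest `C`-coloured tight path ending in `e`. An edge
`w` of colour `c ∈ C` extends every such path ending in its first `k - 1` vertices, so `x_C`
strictly increases from the first to the last `k - 1` vertices of `w` in each of the
`binom(r - 1, s - 1)` coordinates `C ∋ c` of the vector `Φ_0(e) = (x_C(e))_C`. Lifting through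
`Φ_{j+1}(e) = {Φ_j(a, e) : a < e_0}`, the same holds for `<_S^{(j+2)}` along `(k - j)`-tuples,
and at `j = k - 2` the vertices `0 < 1 < ⋯ < N - 1` give a `<_S^{(k)}`-increasing sequence of
length `m_k + 1`, which is impossible.
-/

/-- The `(j)`-fold iterated power set of a type `α`. -/
abbrev IterSet (α : Type) : ℕ → Type
  | 0 => α
  | j + 1 => Set (IterSet α j)

/-- The generalized `S`-less relation `<_S^{(j+2)}` on the `j`-fold iterated
power set of `[n]^R` (vectors are `Fin R → Fin n`): at level `0` (i.e. `k = 2`),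
`x <_S y` iff `x ℓ < y ℓ` in at least `S` coordinates; at level `j + 1`,
`F <_S F'` iff some distinguished `G ∈ F'` satisfies `H <_S G` for all `H ∈ F`. -/
def GenRel (n R S : ℕ) : (j : ℕ) → IterSet (Fin R → Fin n) j → IterSet (Fin R → Fin n) j → Prop
  | 0, x, y => S ≤ (Finset.univ.filter fun ℓ => x ℓ < y ℓ).card
  | j + 1, F, F' => ∃ G ∈ F', ∀ H ∈ F, GenRel n R S j H G

/-- `m_k(n; R, S)`: the maximum length of a generalized `S`-increasing
sequence in the `(k-2)`-fold iterated power set of `[n]^R`. -/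
noncomputable def mGen (k n R S : ℕ) : ℕ :=
  sSup {t : ℕ | ∃ f : Fin t → IterSet (Fin R → Fin n) (k - 2),
    ∀ i j : Fin t, i < j → GenRel n R S (k - 2) (f i) (f j)}

/-- `A_k(n; r, s)`: the least `N` such that every `r`-coloring of the
`k`-element subsets of `[N]` (identified with `{0, …, N-1}`) contains a tight
monotone path with `n` edges using at most `s` colors. -/
noncomputable def colorAvoidA (k n r s : ℕ) : ℕ :=
  sInf {N : ℕ | ∀ Δ : Finset ℕ → Fin r,
    ∃ w : ℕ → ℕ, (∀ i < n + k - 2, w i < w (i + 1)) ∧ (∀ i ≤ n + k - 2, w i < N) ∧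
      ((Finset.range n).image fun i => Δ ((Finset.Icc i (i + k - 1)).image w)).card ≤ s}

open Finset

instance IterSet.instFinite (α : Type) [Finite α] : (j : ℕ) → Finite (IterSet α j)
  | 0 => ‹_›
  | j + 1 => have := IterSet.instFinite α j; inferInstanceAs (Finite (Set _))

section GenRel

variable {n R S : ℕ}

theorem GenRel.irrefl (hS : 0 < S) :
    ∀ {j} (F : IterSet (Fin R → Fin n) j), ¬ GenRel n R S j F F
  | 0, _, h => hS.not_ge ((show S ≤ _ from h).trans_eq (by simp))
  | _ + 1, _, ⟨G, hG, hall⟩ => GenRel.irrefl hS G (hall G hG)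

theorem GenRel.injective_of_chain (hS : 0 < S) {j t : ℕ}
    {f : Fin t → IterSet (Fin R → Fin n) j}
    (hf : ∀ a b, a < b → GenRel n R S j (f a) (f b)) : Function.Injective f := by
  intro a b hab
  by_contra hne
  rcases lt_or_gt_of_ne hne with h | h
  · exact GenRel.irrefl hS _ (hab ▸ hf a b h)
  · exact GenRel.irrefl hS _ (hab ▸ hf b a h)

theorem le_mGen {k t : ℕ} (hS : 0 < S) (f : Fin t → IterSet (Fin R → Fin n) (k - 2))
    (hf : ∀ a b, a < b → GenRel n R S (k - 2) (f a) (f b)) : t ≤ mGen k n R S := by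
  refine le_csSup ⟨Nat.card (IterSet (Fin R → Fin n) (k - 2)), ?_⟩ ⟨f, hf⟩
  rintro t ⟨g, hg⟩
  simpa using Nat.card_le_card_of_injective g (GenRel.injective_of_chain hS hg)

end GenRel

noncomputable def colorSets (r s : ℕ) :
    Fin (r.choose s) ≃ (univ : Finset (Fin r)).powersetCard s :=
  (Fintype.equivFinOfCardEq (by simp)).symm

theorem card_colorSets_mem {r s : ℕ} (hs : 0 < s) (c : Fin r) :
    #{ℓ | c ∈ (colorSets r s ℓ : Finset (Fin r))} = (r - 1).choose (s - 1) := by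
  have hcount := card_filter_powersetCard_subset {c} univ s (subset_univ _)
    (by rw [card_singleton]; exact hs)
  simp only [card_singleton, card_univ, Fintype.card_fin, singleton_subset_iff] at hcount
  rw [← hcount]
  refine card_bij (fun ℓ _ => colorSets r s ℓ) (fun ℓ hℓ => ?_) (fun a _ b _ h => ?_)
    fun A hA => ?_
  · simpa using hℓ
  · exact (colorSets r s).injective (Subtype.ext h)
  · obtain ⟨hA, hcA⟩ := mem_filter.1 hA
    exact ⟨(colorSets r s).symm ⟨A, hA⟩, by simpa using hcA, by simp⟩

/-- `p` is a tight monotone path in `[N]` with `t` edges, all coloured from `C`, whose last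
`k - 1` vertices are `e 0, …, e (k - 2)`. -/
structure IsPathTo {r : ℕ} (Δ : Finset ℕ → Fin r) (C : Finset (Fin r)) (k N t : ℕ)
    (e p : ℕ → ℕ) : Prop where
  lt_succ : ∀ i < t + k - 2, p i < p (i + 1)
  lt_bound : ∀ i ≤ t + k - 2, p i < N
  color_mem : ∀ i < t, Δ ((Icc i (i + k - 1)).image p) ∈ C
  eq_end : ∀ i < k - 1, p (t + i) = e i

noncomputable def longestPathTo {r : ℕ} (Δ : Finset ℕ → Fin r) (C : Finset (Fin r))
    (k N : ℕ) (e : ℕ → ℕ) : ℕ :=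
  sSup {t | ∃ p, IsPathTo Δ C k N t e p}

def NoFewColoredPath {r : ℕ} (Δ : Finset ℕ → Fin r) (k n N s : ℕ) : Prop :=
  ∀ w : ℕ → ℕ, (∀ i < n + k - 2, w i < w (i + 1)) → (∀ i ≤ n + k - 2, w i < N) →
    s < #((range n).image fun i => Δ ((Icc i (i + k - 1)).image w))

section Paths

variable {r k n N s t : ℕ} {Δ : Finset ℕ → Fin r} {C : Finset (Fin r)} {e p w : ℕ → ℕ}

theorem IsPathTo.length_lt (hΔ : NoFewColoredPath Δ k n N s) (hC : #C ≤ s)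
    (hp : IsPathTo Δ C k N t e p) : t < n := by
  by_contra! htn
  have hsub : (range n).image (fun i => Δ ((Icc i (i + k - 1)).image p)) ⊆ C := by
    simp only [image_subset_iff, mem_range]
    exact fun i hi => hp.color_mem i (by omega)
  have := hΔ p (fun i hi => hp.lt_succ i (by omega)) (fun i hi => hp.lt_bound i (by omega))
  have := card_le_card hsub
  omega

theorem bddAbove_pathLengths (hΔ : NoFewColoredPath Δ k n N s) (hC : #C ≤ s) (e : ℕ → ℕ) :
    BddAbove {t | ∃ p, IsPathTo Δ C k N t e p} :=
  ⟨n, fun _ ⟨_, hp⟩ => (hp.length_lt hΔ hC).le⟩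

theorem longestPathTo_le (hΔ : NoFewColoredPath Δ k n N s) (hC : #C ≤ s) (e : ℕ → ℕ) :
    longestPathTo Δ C k N e ≤ n - 1 :=
  csSup_le' fun _ ⟨_, hp⟩ => Nat.le_sub_one_of_lt (hp.length_lt hΔ hC)

theorem isPathTo_zero (hk : 2 ≤ k) (he : ∀ i < k - 2, e i < e (i + 1))
    (heN : ∀ i ≤ k - 2, e i < N) : IsPathTo Δ C k N 0 e e where
  lt_succ i hi := he i (by omega)
  lt_bound i hi := heN i (by omega)
  color_mem i hi := absurd hi (Nat.not_lt_zero i)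
  eq_end i _ := by rw [zero_add]

theorem image_Icc_eq_of_shift {q w : ℕ → ℕ} {a m : ℕ} (h : ∀ x ≤ m, q (a + x) = w x) :
    (Icc a (a + m)).image q = (Icc 0 m).image w := by
  have := image_add_left_Icc 0 m a
  rw [add_zero] at this
  rw [← this, image_image]
  exact image_congr fun x hx => h x (mem_Icc.1 hx).2

theorem IsPathTo.extend (hk : 2 ≤ k) (hw : ∀ i < k - 1, w i < w (i + 1))
    (hwN : ∀ i ≤ k - 1, w i < N) (hc : Δ ((Icc 0 (k - 1)).image w) ∈ C)
    (hp : IsPathTo Δ C k N t w p) :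
    IsPathTo Δ C k N (t + 1) (fun i => w (i + 1))
      (Function.update p (t + k - 1) (w (k - 1))) := by
  set q := Function.update p (t + k - 1) (w (k - 1))
  have hold : ∀ i ≤ t + k - 2, q i = p i := fun i hi =>
    Function.update_of_ne (by omega) _ _
  have hnew : ∀ x ≤ k - 1, q (t + x) = w x := by
    intro x hx
    rcases eq_or_lt_of_le hx with rfl | hx
    · simp [q, show t + (k - 1) = t + k - 1 by omega]
    · rw [hold _ (by omega), hp.eq_end x hx]
  refine ⟨fun i hi => ?_, fun i hi => ?_, fun i hi => ?_, fun i hi => ?_⟩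
  · rcases lt_or_ge (i + 1) (t + k - 1) with h | h
    · rw [hold i (by omega), hold (i + 1) (by omega)]
      exact hp.lt_succ i (by omega)
    · obtain rfl : i = t + (k - 2) := by omega
      rw [hnew _ (by omega), add_assoc, hnew _ (by omega)]
      exact hw _ (by omega)
  · rcases le_or_gt i (t + k - 2) with h | h
    · rw [hold i h]
      exact hp.lt_bound i h
    · obtain rfl : i = t + (k - 1) := by omega
      rw [hnew _ le_rfl]
      exact hwN _ le_rfl
  · rcases lt_or_ge i t with h | h
    · rw [image_congr fun x hx => hold x (by have := (mem_Icc.1 hx).2; omega)]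
      exact hp.color_mem i h
    · rwa [show i = t by omega, show t + k - 1 = t + (k - 1) by omega,
        image_Icc_eq_of_shift hnew]
  · rw [add_right_comm, add_assoc, hnew _ (by omega)]

theorem longestPathTo_lt_of_edge (hk : 2 ≤ k) (hΔ : NoFewColoredPath Δ k n N s) (hC : #C ≤ s)
    (hw : ∀ i < k - 1, w i < w (i + 1)) (hwN : ∀ i ≤ k - 1, w i < N)
    (hc : Δ ((Icc 0 (k - 1)).image w) ∈ C) :
    longestPathTo Δ C k N w < longestPathTo Δ C k N (fun i => w (i + 1)) := by
  have hne : {t | ∃ p, IsPathTo Δ C k N t w p}.Nonempty :=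
    ⟨0, w, isPathTo_zero hk (fun i hi => hw i (by omega)) (fun i hi => hwN i (by omega))⟩
  obtain ⟨p, hp⟩ := Nat.sSup_mem hne (bddAbove_pathLengths hΔ hC w)
  exact le_csSup (bddAbove_pathLengths hΔ hC _) ⟨_, hp.extend hk hw hwN hc⟩

theorem longestPathTo_congr {e' : ℕ → ℕ} (h : ∀ i < k - 1, e i = e' i) :
    longestPathTo Δ C k N e = longestPathTo Δ C k N e' := by
  have hiff (p : ℕ → ℕ) (t : ℕ) : IsPathTo Δ C k N t e p ↔ IsPathTo Δ C k N t e' p := by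
    constructor <;> exact fun ⟨h₁, h₂, h₃, h₄⟩ =>
      ⟨h₁, h₂, h₃, fun i hi => by simp [h₄ i hi, h i hi]⟩
  simp only [longestPathTo, hiff]

end Paths

def seqCons (a : ℕ) (w : ℕ → ℕ) : ℕ → ℕ
  | 0 => a
  | i + 1 => w i

theorem seqCons_head_tail (w : ℕ → ℕ) : seqCons (w 0) (fun i => w (i + 1)) = w := by
  funext i; cases i <;> rfl

noncomputable def pathProfile {r : ℕ} (Δ : Finset ℕ → Fin r) (k n N s : ℕ) [NeZero n] :
    (j : ℕ) → (ℕ → ℕ) → IterSet (Fin (r.choose s) → Fin n) j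
  -- `Fin.ofNat` reduces mod `n`, which is harmless when all paths are short (`longestPathTo_le`)
  | 0, e => fun ℓ => Fin.ofNat n (longestPathTo Δ (colorSets r s ℓ) k N e)
  | j + 1, e => (fun a => pathProfile Δ k n N s j (seqCons a e)) '' Set.Iio (e 0)

section pathProfile

variable {r k n N s : ℕ} {Δ : Finset ℕ → Fin r} [NeZero n]

theorem pathProfile_congr (hk : 2 ≤ k) : ∀ {j}, j ≤ k - 2 → ∀ {e e' : ℕ → ℕ},
    (∀ i ≤ k - 2 - j, e i = e' i) → pathProfile Δ k n N s j e = pathProfile Δ k n N s j e'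
  | 0, _, _, _, h => funext fun ℓ => by
    simp only [pathProfile]
    rw [longestPathTo_congr fun i hi => h i (by omega)]
  | j + 1, hj, e, e', h => by
    simp only [pathProfile]
    rw [h 0 (Nat.zero_le _)]
    refine Set.image_congr fun a _ => pathProfile_congr hk (by omega) fun i hi => ?_
    cases i with
    | zero => rfl
    | succ i => exact h i (by omega)

theorem genRel_pathProfile (hk : 2 ≤ k) (hs : 0 < s) (hΔ : NoFewColoredPath Δ k n N s) :
    ∀ {j}, j ≤ k - 2 → ∀ {w : ℕ → ℕ}, (∀ i < k - 1 - j, w i < w (i + 1)) →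
      (∀ i ≤ k - 1 - j, w i < N) →
      GenRel n (r.choose s) ((r - 1).choose (s - 1)) j
        (pathProfile Δ k n N s j w) (pathProfile Δ k n N s j fun i => w (i + 1))
  | 0, _, w, hw, hwN => by
    simp only [GenRel]
    rw [← card_colorSets_mem hs (Δ ((Icc 0 (k - 1)).image w))]
    refine card_le_card fun ℓ hℓ => mem_filter.2 ⟨mem_univ _, ?_⟩
    replace hℓ := (mem_filter.1 hℓ).2
    have hC : #(colorSets r s ℓ : Finset (Fin r)) ≤ s :=
      (mem_powersetCard.1 (colorSets r s ℓ).2).2.le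
    have hlt := longestPathTo_lt_of_edge hk hΔ hC (fun i hi => hw i (by omega))
      (fun i hi => hwN i (by omega)) hℓ
    have hle := longestPathTo_le hΔ hC fun i => w (i + 1)
    have hn := NeZero.pos n
    rw [Fin.lt_def]
    simp only [pathProfile, Fin.val_ofNat]
    rwa [Nat.mod_eq_of_lt (by omega), Nat.mod_eq_of_lt (by omega)]
  | j + 1, hj, w, hw, hwN => by
    refine ⟨pathProfile Δ k n N s j w,
      ⟨w 0, hw 0 (by omega), congrArg _ (seqCons_head_tail w)⟩, ?_⟩
    rintro _ ⟨a, ha, rfl⟩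
    refine genRel_pathProfile hk hs hΔ (j := j) (by omega) (w := seqCons a w) (fun i hi => ?_)
      fun i hi => ?_
    · cases i with
      | zero => exact ha
      | succ i => exact hw i (by omega)
    · cases i with
      | zero => exact ha.trans (hwN 0 (by omega))
      | succ i => exact hwN i (by omega)

theorem genRel_pathProfile_of_lt (hk : 2 ≤ k) (hs : 0 < s) (hΔ : NoFewColoredPath Δ k n N s)
    {u v : ℕ} (huv : u < v) (hv : v < N) :
    GenRel n (r.choose s) ((r - 1).choose (s - 1)) (k - 2)
      (pathProfile Δ k n N s (k - 2) fun _ => u) (pathProfile Δ k n N s (k - 2) fun _ => v) := by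
  have := genRel_pathProfile hk hs hΔ le_rfl (w := seqCons u fun _ => v)
    (fun i hi => by obtain rfl : i = 0 := (by omega); exact huv)
    fun i hi => by
      obtain rfl | rfl : i = 0 ∨ i = 1 := (by omega)
      exacts [huv.trans hv, hv]
  rwa [pathProfile_congr hk le_rfl (e' := fun _ => u)
    fun i hi => by obtain rfl : i = 0 := (by omega); rfl] at this

end pathProfile

/-- For all `n ≥ k ≥ 2` and `r > s ≥ 1`,
`A_k(n; r, s) ≤ m_k(n; binom(r,s), binom(r-1,s-1)) + 1`. -/
theorem colorAvoidA_le_mGen (n k r s : ℕ) (hk : 2 ≤ k) (hkn : k ≤ n)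
    (hs : 1 ≤ s) (hsr : s < r) :
    colorAvoidA k n r s ≤
      mGen k n (Nat.choose r s) (Nat.choose (r - 1) (s - 1)) + 1 := by
  set N := mGen k n (Nat.choose r s) (Nat.choose (r - 1) (s - 1)) + 1
  have : NeZero n := ⟨by omega⟩
  refine Nat.sInf_le fun Δ => ?_
  by_contra hΔ
  push Not at hΔ
  have := le_mGen (Nat.choose_pos (by omega : s - 1 ≤ r - 1))
    (fun v : Fin N => pathProfile Δ k n N s (k - 2) fun _ => v)
    fun u v huv => genRel_pathProfile_of_lt hk hs hΔ huv v.2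
  omega
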